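/- Suppose N is a 4×4 positive semidefinite matrix acting on Bob's system such that ⟨ψ|(I⊗N)|ψ'⟩ = 0 for all distinct |ψ⟩,|ψ'⟩ in S₁, and additionally ⟨ψ|(I⊗N)|ψ⟩ is consistent with preserving the orthogonality structure (i.e., ⟨b|N|b'⟩⟨a|a'⟩ = 0 for all distinct pairs and ⟨0+1|N|0−1⟩ = ⟨2+3|N|2−3⟩ = ⟨1+2|N|1−2⟩ = 0). Then N is a scalar multiple of the identity. -/

import Mathlib

open scoped BigOperators ComplexOrder

noncomputable section

def e4 (i : Fin 4) : Fin 4 → ℂ := fun j => if j = i then 1 else 0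
def dot4 (x y : Fin 4 → ℂ) : ℂ := ∑ i, star (x i) * y i
def p4 (i j : Fin 4) : Fin 4 → ℂ := ((Real.sqrt 2 : ℂ))⁻¹ • (e4 i + e4 j)
def m4 (i j : Fin 4) : Fin 4 → ℂ := ((Real.sqrt 2 : ℂ))⁻¹ • (e4 i - e4 j)

/-- The 16 product states of `S₁ ⊂ ℂ⁴⊗ℂ⁴`, as (Alice factor, Bob factor) pairs. -/
def S1 : Fin 16 → (Fin 4 → ℂ) × (Fin 4 → ℂ) :=
  ![(e4 0, p4 0 1), (e4 0, m4 0 1), (e4 0, p4 2 3), (e4 0, m4 2 3),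
    (p4 1 2, e4 0), (m4 1 2, e4 0), (e4 3, e4 0),
    (e4 1, p4 1 2), (e4 1, m4 1 2), (e4 1, e4 3),
    (p4 2 3, e4 1), (m4 2 3, e4 1),
    (e4 2, p4 2 3), (e4 2, m4 2 3),
    (e4 3, e4 2), (e4 3, e4 3)]

/-!
Each pair of states of `S₁` whose Alice factors overlap forces a linear relation among the
entries of `N`; six such pairs kill the strict upper triangle. The orthogonality condition is
invariant under `N ↦ Nᴴ` (swap the pair and conjugate), so the lower triangle vanishes too, and
the three conditions `⟨i+j|N|i−j⟩ = 0` then read `N i i = N j j` along the chain `0, 1, 2, 3`.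
-/

open Matrix

theorem Matrix.IsDiag.eq_smul_one {n α : Type*} [DecidableEq n] [NonAssocSemiring α]
    {A : Matrix n n α} (hA : A.IsDiag) {c : α} (hc : ∀ i, A i i = c) : A = c • 1 := by
  rw [← hA.diagonal_diag, smul_one_eq_diagonal]
  exact congrArg diagonal (funext hc)

lemma dot4_eq_star_dotProduct (x y : Fin 4 → ℂ) : dot4 x y = star x ⬝ᵥ y := rfl

lemma dot4_eq_star_dot4 (x y : Fin 4 → ℂ) : dot4 x y = star (dot4 y x) := by
  rw [dot4_eq_star_dotProduct, dot4_eq_star_dotProduct, star_dotProduct]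

lemma dot4_conjTranspose_mulVec (N : Matrix (Fin 4) (Fin 4) ℂ) (x y : Fin 4 → ℂ) :
    dot4 x (Nᴴ *ᵥ y) = star (dot4 y (N *ᵥ x)) := by
  rw [dot4_eq_star_dotProduct, dot4_eq_star_dotProduct, dotProduct_mulVec, ← star_mulVec,
    star_dotProduct]

lemma e4_eq_single (i : Fin 4) : e4 i = Pi.single i 1 := by
  ext j
  simp [e4, Pi.single_apply]

section Coordinates

variable (x : Fin 4 → ℂ) (N : Matrix (Fin 4) (Fin 4) ℂ) (i j k : Fin 4)

lemma e4_apply : e4 i j = if j = i then 1 else 0 := rfl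

lemma dot4_e4_left : dot4 (e4 i) x = x i := by
  simp [dot4_eq_star_dotProduct, e4_eq_single]

lemma dot4_p4_left : dot4 (p4 i j) x = (x i + x j) / √2 := by
  simp [dot4_eq_star_dotProduct, p4, e4_eq_single]
  ring

lemma dot4_m4_left : dot4 (m4 i j) x = (x i - x j) / √2 := by
  simp [dot4_eq_star_dotProduct, m4, e4_eq_single]
  ring

lemma mulVec_e4_apply : (N *ᵥ e4 j) i = N i j := by
  simp [e4_eq_single]

lemma mulVec_p4_apply : (N *ᵥ p4 j k) i = (N i j + N i k) / √2 := by
  simp [p4, e4_eq_single, mulVec_smul, mulVec_add]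
  ring

lemma mulVec_m4_apply : (N *ᵥ m4 j k) i = (N i j - N i k) / √2 := by
  simp [m4, e4_eq_single, mulVec_smul, mulVec_sub]
  ring

end Coordinates

lemma dot4_p4_mulVec_m4_of_isDiag {N : Matrix (Fin 4) (Fin 4) ℂ} (hN : N.IsDiag) {i j : Fin 4}
    (hij : i ≠ j) : dot4 (p4 i j) (N *ᵥ m4 i j) = (N i i - N j j) / 2 := by
  have hsq : (√2 : ℂ) * √2 = 2 := by exact_mod_cast Real.mul_self_sqrt zero_le_two
  rw [dot4_p4_left, mulVec_m4_apply, mulVec_m4_apply, hN hij, hN hij.symm, ← hsq]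
  ring

lemma diag_eq_of_dot4_p4_mulVec_m4_eq_zero {N : Matrix (Fin 4) (Fin 4) ℂ} (hN : N.IsDiag)
    {i j : Fin 4} (hij : i ≠ j) (h : dot4 (p4 i j) (N *ᵥ m4 i j) = 0) : N i i = N j j := by
  rw [dot4_p4_mulVec_m4_of_isDiag hN hij] at h
  linear_combination 2 * h

def PreservesOrthS1 (N : Matrix (Fin 4) (Fin 4) ℂ) : Prop :=
  ∀ i j : Fin 16, i ≠ j → dot4 (S1 i).1 (S1 j).1 * dot4 (S1 i).2 (N *ᵥ (S1 j).2) = 0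

namespace PreservesOrthS1

variable {N : Matrix (Fin 4) (Fin 4) ℂ}

theorem conjTranspose (hN : PreservesOrthS1 N) : PreservesOrthS1 Nᴴ := by
  intro i j hij
  rw [dot4_conjTranspose_mulVec, dot4_eq_star_dot4 (S1 i).1, ← star_mul', hN j i hij.symm,
    star_zero]

theorem upper_eq_zero (hN : PreservesOrthS1 N) {i j : Fin 4} (hij : i < j) : N i j = 0 := by
  -- `|1+2⟩|0⟩` against `|1⟩|1±2⟩`, `|1⟩|3⟩`; `|1⟩|1±2⟩` against `|1⟩|3⟩`;
  -- `|2+3⟩|1⟩` against `|2⟩|2+3⟩`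
  have h47 := hN 4 7 (by decide)
  have h48 := hN 4 8 (by decide)
  have h49 := hN 4 9 (by decide)
  have h79 := hN 7 9 (by decide)
  have h89 := hN 8 9 (by decide)
  have h1012 := hN 10 12 (by decide)
  simp [S1, e4_apply, dot4_e4_left, dot4_p4_left, dot4_m4_left, mulVec_e4_apply,
    mulVec_p4_apply, mulVec_m4_apply] at h47 h48 h49 h79 h89 h1012
  have h01 : N 0 1 = 0 := by linear_combination (h47 + h48) / 2
  have h02 : N 0 2 = 0 := by linear_combination (h47 - h48) / 2
  have h13 : N 1 3 = 0 := by linear_combination (h79 + h89) / 2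
  have h23 : N 2 3 = 0 := by linear_combination (h79 - h89) / 2
  have h12 : N 1 2 = 0 := by linear_combination h1012 - h13
  fin_cases i <;> fin_cases j <;> first | exact absurd hij (by decide) | assumption

theorem isDiag (hN : PreservesOrthS1 N) : N.IsDiag := by
  intro i j hij
  rcases hij.lt_or_gt with hij | hji
  · exact hN.upper_eq_zero hij
  · simpa using hN.conjTranspose.upper_eq_zero hji

end PreservesOrthS1

theorem stmt11_general (N : Matrix (Fin 4) (Fin 4) ℂ)
    (h : ∀ i j : Fin 16, i ≠ j →
      dot4 (S1 i).1 (S1 j).1 * dot4 (S1 i).2 (N.mulVec (S1 j).2) = 0)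
    (h1 : dot4 (p4 0 1) (N.mulVec (m4 0 1)) = 0)
    (h2 : dot4 (p4 2 3) (N.mulVec (m4 2 3)) = 0)
    (h3 : dot4 (p4 1 2) (N.mulVec (m4 1 2)) = 0) :
    ∃ c : ℂ, N = c • (1 : Matrix (Fin 4) (Fin 4) ℂ) := by
  have hd : N.IsDiag := PreservesOrthS1.isDiag h
  have d01 := diag_eq_of_dot4_p4_mulVec_m4_eq_zero hd (by decide) h1
  have d12 := diag_eq_of_dot4_p4_mulVec_m4_eq_zero hd (by decide) h3
  have d23 := diag_eq_of_dot4_p4_mulVec_m4_eq_zero hd (by decide) h2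
  refine ⟨N 0 0, hd.eq_smul_one fun i => ?_⟩
  fin_cases i
  exacts [rfl, d01.symm, (d01.trans d12).symm, (d01.trans (d12.trans d23)).symm]

/-- if a PSD matrix `N` on Bob's side preserves the orthogonality of `S₁`,
i.e. `⟨a|a'⟩·⟨b|N|b'⟩ = 0` for all distinct product pairs, and in addition
`⟨0+1|N|0−1⟩ = ⟨2+3|N|2−3⟩ = ⟨1+2|N|1−2⟩ = 0`, then `N` is a scalar multiple of the
identity. -/
theorem stmt11 (N : Matrix (Fin 4) (Fin 4) ℂ) (hN : N.PosSemidef)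
    (h : ∀ i j : Fin 16, i ≠ j →
      dot4 (S1 i).1 (S1 j).1 * dot4 (S1 i).2 (N.mulVec (S1 j).2) = 0)
    (h1 : dot4 (p4 0 1) (N.mulVec (m4 0 1)) = 0)
    (h2 : dot4 (p4 2 3) (N.mulVec (m4 2 3)) = 0)
    (h3 : dot4 (p4 1 2) (N.mulVec (m4 1 2)) = 0) :
    ∃ c : ℂ, N = c • (1 : Matrix (Fin 4) (Fin 4) ℂ) :=
  stmt11_general N h h1 h2 h3
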